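/- arXiv:1010.1499 — 5 statements merged into one kernel-verified Lean document; each statement's English description precedes it below -/
import Mathlib

section
/- For any integers $1 \le j \le K$, the identity $\frac{1}{\binom{K}{j-1}}\sum_{i=1}^{K-j+1}\frac{\binom{K-i}{j-1}}{i} = \sum_{i=j}^{K}\frac{1}{i}$ holds. -/
/-!
Write `S j K = ∑_{i=1}^{K} C(K-i, j) / i`; the terms with `i > K - j` vanish, so this is the sum in
the statement with `j - 1` in place of `j`. Pascal's rule applied to each term gives
`S (j+1) (K+1) = S (j+1) K + S j K`, and `C(K, j) (H_K - H_j)` satisfies the same recursion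
because `C(K, j) / (j+1) = C(K+1, j+1) / (K+1)`. Double induction gives `S j K = C(K, j) (H_K - H_j)`.
-/

open Finset

lemma sum_Icc_inv_eq_harmonic_sub {m n : ℕ} (hmn : m ≤ n) :
    ∑ i ∈ Icc (m + 1) n, (i : ℚ)⁻¹ = harmonic n - harmonic m := by
  have Icc_one (k : ℕ) : Icc 1 k = Ioc 0 k := Icc_add_one_left_eq_Ioc 0 k
  rw [eq_sub_iff_add_eq', harmonic_eq_sum_Icc, harmonic_eq_sum_Icc, Icc_one, Icc_one,
    Icc_add_one_left_eq_Ioc, sum_Ioc_consecutive _ (Nat.zero_le m) hmn]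

lemma sum_Icc_choose_sub_div_succ (K j : ℕ) :
    ∑ i ∈ Icc 1 (K + 1), ((K + 1 - i).choose (j + 1) : ℚ) / i =
      ∑ i ∈ Icc 1 K, ((K - i).choose (j + 1) : ℚ) / i +
        ∑ i ∈ Icc 1 K, ((K - i).choose j : ℚ) / i := by
  rw [sum_Icc_succ_top (by omega), Nat.sub_self, Nat.choose_zero_succ, Nat.cast_zero, zero_div,
    add_zero, ← sum_add_distrib]
  refine sum_congr rfl fun i hi => ?_
  rw [show K + 1 - i = K - i + 1 by grind, Nat.choose_succ_succ', Nat.cast_add, add_div,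
    add_comm]

lemma sum_Icc_choose_sub_div (j K : ℕ) :
    ∑ i ∈ Icc 1 K, ((K - i).choose j : ℚ) / i = K.choose j * (harmonic K - harmonic j) := by
  induction j generalizing K with
  | zero =>
    simp [harmonic_eq_sum_Icc, div_eq_mul_inv]
  | succ j ihj =>
    induction K with
    | zero => simp
    | succ K ihK =>
      have pascal : ((K + 1).choose (j + 1) : ℚ) = K.choose j + K.choose (j + 1) := by
        exact_mod_cast Nat.choose_succ_succ' K j
      have absorption : ((K : ℚ) + 1) * K.choose j = (K + 1).choose (j + 1) * ((j : ℚ) + 1) := by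
        exact_mod_cast Nat.add_one_mul_choose_eq K j
      rw [sum_Icc_choose_sub_div_succ, ihK, ihj, harmonic_succ, harmonic_succ, pascal]
      rw [pascal] at absorption
      push_cast
      field_simp
      linear_combination absorption

theorem stmt_0 (K j : ℕ) (hj : 1 ≤ j) (hjK : j ≤ K) :
    (1 / (K.choose (j - 1) : ℚ)) *
      ∑ i ∈ Finset.Icc 1 (K - j + 1), ((K - i).choose (j - 1) : ℚ) / (i : ℚ) =
    ∑ i ∈ Finset.Icc j K, 1 / (i : ℚ) := by
  obtain ⟨j, rfl⟩ := Nat.exists_eq_add_of_le' hj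
  have vanishing : ∀ i ∈ Icc 1 K, i ∉ Icc 1 (K - (j + 1) + 1) →
      ((K - i).choose j : ℚ) / i = 0 := by
    intro i _ hi
    rw [Nat.choose_eq_zero_of_lt (by grind), Nat.cast_zero, zero_div]
  have choose_ne_zero : (K.choose j : ℚ) ≠ 0 := by
    exact_mod_cast (Nat.choose_pos (by omega)).ne'
  rw [Nat.add_sub_cancel, sum_subset (Icc_subset_Icc_right (by omega)) vanishing,
    sum_Icc_choose_sub_div, one_div, inv_mul_cancel_left₀ choose_ne_zero,
    ← sum_Icc_inv_eq_harmonic_sub (by omega)]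
  simp only [one_div]
end

section
/- Define $f(j) = \frac{1}{\binom{K}{j-1}}\sum_{i=1}^{K-j+1}\frac{\binom{K-i}{j-1}}{i}$ for $1 \le j \le K$. Then $f(K) = 1/K$ and for every $1 \le j \le K-1$, $f(j) - f(j+1) = 1/j$. -/
/-!
The identity `∑_{i=1}^{N} C(N-i, k) / i = C(N, k) (H_N - H_k)` for the harmonic numbers `H`
(the terms with `i > N - k` vanish) shows `f j = H_K - H_{j-1}`, and both claims become
`H_j - H_{j-1} = 1 / j`.
-/

open Finset

/-- By Pascal's rule both sides satisfy `S (N + 1) (k + 1) = S N k + S N (k + 1)`; for the right-hand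
side this reduces to `(N + 1) * C(N, k) = (k + 1) * C(N + 1, k + 1)`. -/
theorem sum_Icc_choose_sub_div_eq_choose_mul_harmonic_sub (N k : ℕ) :
    ∑ i ∈ Icc 1 N, ((N - i).choose k : ℚ) / i = N.choose k * (harmonic N - harmonic k) := by
  induction N generalizing k with
  | zero => cases k <;> simp
  | succ N ih =>
    cases k with
    | zero => simp [harmonic_eq_sum_Icc, div_eq_mul_inv, sum_Icc_succ_top]
    | succ k =>
      have pascal : ∀ i ∈ Icc 1 N, ((N + 1 - i).choose (k + 1) : ℚ) / i
          = ((N - i).choose k : ℚ) / i + ((N - i).choose (k + 1) : ℚ) / i := by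
        intro i hi
        rw [Nat.sub_add_comm (mem_Icc.mp hi).2, Nat.choose_succ_succ', Nat.cast_add, add_div]
      have hmul : ((N + 1 : ℕ) : ℚ) * N.choose k = (N + 1).choose (k + 1) * ((k + 1 : ℕ) : ℚ) := by
        exact_mod_cast Nat.add_one_mul_choose_eq N k
      rw [Nat.choose_succ_succ', Nat.cast_add] at hmul
      rw [sum_Icc_succ_top (by omega), Nat.sub_self, Nat.choose_zero_succ, Nat.cast_zero,
        zero_div, add_zero, sum_congr rfl pascal, sum_add_distrib, ih, ih, harmonic_succ,
        harmonic_succ, Nat.choose_succ_succ' N k, Nat.cast_add]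
      push_cast at hmul ⊢
      field_simp
      linear_combination hmul

theorem sum_Icc_sub_choose_sub_div_eq_sum_Icc (N k : ℕ) :
    ∑ i ∈ Icc 1 (N - k), ((N - i).choose k : ℚ) / i = ∑ i ∈ Icc 1 N, ((N - i).choose k : ℚ) / i := by
  refine sum_subset (Icc_subset_Icc_right (Nat.sub_le N k)) fun i hi hi' => ?_
  simp only [mem_Icc, not_and, not_le] at hi hi'
  rw [Nat.choose_eq_zero_of_lt (by omega), Nat.cast_zero, zero_div]

theorem harmonic_sub_harmonic_sub_one {n : ℕ} (hn : 1 ≤ n) :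
    harmonic n - harmonic (n - 1) = 1 / n := by
  obtain ⟨m, rfl⟩ := Nat.exists_eq_add_of_le' hn
  rw [harmonic_succ, Nat.add_sub_cancel, add_sub_cancel_left, one_div]

theorem stmt_2 (K : ℕ) (hK : 1 ≤ K)
    (f : ℕ → ℚ)
    (hf : ∀ j, f j = (1 / (K.choose (j - 1) : ℚ)) *
      ∑ i ∈ Finset.Icc 1 (K - j + 1), ((K - i).choose (j - 1) : ℚ) / (i : ℚ)) :
    f K = 1 / (K : ℚ) ∧
    ∀ j, 1 ≤ j → j ≤ K - 1 → f j - f (j + 1) = 1 / (j : ℚ) := by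
  have hf_eq : ∀ j, 1 ≤ j → j ≤ K → f j = harmonic K - harmonic (j - 1) := by
    intro j hj hjK
    have hchoose : (K.choose (j - 1) : ℚ) ≠ 0 := by exact_mod_cast (Nat.choose_pos (by omega)).ne'
    rw [hf, show K - j + 1 = K - (j - 1) by omega, sum_Icc_sub_choose_sub_div_eq_sum_Icc,
      sum_Icc_choose_sub_div_eq_choose_mul_harmonic_sub, one_div, inv_mul_cancel_left₀ hchoose]
  refine ⟨by rw [hf_eq K hK le_rfl, harmonic_sub_harmonic_sub_one hK], fun j hj hjK => ?_⟩
  rw [hf_eq j hj (by omega), hf_eq (j + 1) (by omega) (by omega), Nat.add_sub_cancel,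
    sub_sub_sub_cancel_left, harmonic_sub_harmonic_sub_one hj]
end

section
/- Define the sequence $D_j$ for $1 \le j \le K$ by $D_K = 1$ and the backward recursion $\frac{K-j+1}{j}\cdot\frac{1}{D_j} = \frac{1}{j} + \frac{K-j}{j+1}\cdot\frac{1}{D_{j+1}}$ for $1 \le j \le K-1$. Then $D_j = \frac{K-j+1}{j} \cdot \frac{1}{\sum_{i=j}^{K} \frac{1}{i}}$ for all $1 \le j \le K$. -/
/-!
Put `E j = (K - j + 1) / j * (1 / D j)`. The recursion says exactly `E j = 1 / j + E (j + 1)`,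
and `E K = 1 / K`, so `E j` is the harmonic tail `∑_{i=j}^K 1 / i`; solving for `D j` gives the
formula.
-/

open Finset

theorem eq_sum_Icc_of_eq_add_succ {M : Type*} [AddCommMonoid M] {f g : ℕ → M} {a K : ℕ}
    (hK : f K = g K) (hstep : ∀ j, a ≤ j → j < K → f j = g j + f (j + 1))
    {j : ℕ} (haj : a ≤ j) (hjK : j ≤ K) : f j = ∑ i ∈ Icc j K, g i := by
  induction hjK using Nat.decreasingInduction with
  | self => simp [hK]
  | of_succ k hk ih =>
    rw [hstep k haj hk, ih (by omega), ← add_sum_Ioc_eq_sum_Icc hk.le,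
      Icc_add_one_left_eq_Ioc]

theorem stmt_5_general (K : ℕ) (D : ℕ → ℚ)
    (hpos : ∀ j, 1 ≤ j → j ≤ K → 0 < D j)
    (hDK : D K = 1)
    (hrec : ∀ j, 1 ≤ j → j ≤ K - 1 →
      ((K : ℚ) - j + 1) / j * (1 / D j) =
        1 / (j : ℚ) + ((K : ℚ) - j) / (j + 1) * (1 / D (j + 1))) :
    ∀ j, 1 ≤ j → j ≤ K →
      D j = ((K : ℚ) - j + 1) / j * (1 / ∑ i ∈ Finset.Icc j K, 1 / (i : ℚ)) := by
  intro j hj hjK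
  have htail : ((K : ℚ) - j + 1) / j * (1 / D j) = ∑ i ∈ Icc j K, 1 / (i : ℚ) := by
    refine eq_sum_Icc_of_eq_add_succ (f := fun j : ℕ ↦ ((K : ℚ) - j + 1) / j * (1 / D j))
      (a := 1) (by simp [hDK]) (fun k hk hkK ↦ ?_) hj hjK
    simp only [hrec k hk (by omega), Nat.cast_add, Nat.cast_one]
    ring
  have hnum : (K : ℚ) - j + 1 ≠ 0 := by
    have : (j : ℚ) ≤ K := by exact_mod_cast hjK
    linarith
  have hden : (j : ℚ) ≠ 0 := by positivity
  rw [← htail]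
  field_simp [(hpos j hj hjK).ne']

theorem stmt_5 (K : ℕ) (hK : 1 ≤ K) (D : ℕ → ℚ)
    (hpos : ∀ j, 1 ≤ j → j ≤ K → 0 < D j)
    (hDK : D K = 1)
    (hrec : ∀ j, 1 ≤ j → j ≤ K - 1 →
      ((K : ℚ) - j + 1) / j * (1 / D j) =
        1 / (j : ℚ) + ((K : ℚ) - j) / (j + 1) * (1 / D (j + 1))) :
    ∀ j, 1 ≤ j → j ≤ K →
      D j = ((K : ℚ) - j + 1) / j * (1 / ∑ i ∈ Finset.Icc j K, 1 / (i : ℚ)) :=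
  stmt_5_general K D hpos hDK hrec
end

section
/- For $M \ge K - j + 1$, the achievable lower bound $\frac{K-j+1}{j}\cdot\frac{1}{\sum_{i=j}^{K} 1/i}$ equals the upper bound $\binom{K}{j} \Big/ \sum_{i=1}^{K-j+1} \frac{\binom{K-i}{j-1}}{\min\{i, M\}}$, where under the assumption $M \ge K-j+1$ each $\min\{i,M\} = i$ for $i \le K-j+1$. -/
/-!
With `S(n, m) = ∑_{i=1}^{n} C(n+m-i, m) / i`, the denominator of the upper bound is
`S(K-j+1, j-1)`. Pascal's rule gives `S(n+1, m+1) = S(n, m+1) + S(n+1, m)`, and the absorption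
identity `(N+1) C(N, m) = (m+1) C(N+1, m+1)` shows that `C(n+m, m) (H_{n+m} - H_m)` obeys the same
recurrence and boundary values, so the two agree. Hence the upper bound equals
`C(K, j) / (C(K, j-1) ∑_{i=j}^{K} 1/i)`, and `j C(K, j) = (K-j+1) C(K, j-1)` turns it into the lower bound.
-/

open Finset

lemma sum_Icc_one_div_eq_harmonic_sub {m N : ℕ} (hmN : m ≤ N) :
    ∑ i ∈ Icc (m + 1) N, 1 / (i : ℚ) = harmonic N - harmonic m := by
  induction N, hmN using Nat.le_induction with
  | base => simp
  | succ N hmN ih =>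
    rw [sum_Icc_succ_top (by omega), ih, harmonic_succ, one_div]
    ring

def binomHarmonicSum (n m : ℕ) : ℚ :=
  ∑ i ∈ Icc 1 n, ((n + m - i).choose m : ℚ) / i

lemma binomHarmonicSum_zero_left (m : ℕ) : binomHarmonicSum 0 m = 0 := by
  simp [binomHarmonicSum]

lemma binomHarmonicSum_zero_right (n : ℕ) : binomHarmonicSum n 0 = harmonic n := by
  simp [binomHarmonicSum, harmonic_eq_sum_Icc]

lemma binomHarmonicSum_succ_succ (n m : ℕ) :
    binomHarmonicSum (n + 1) (m + 1) = binomHarmonicSum n (m + 1) + binomHarmonicSum (n + 1) m := by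
  have pascal : ∀ i ∈ Icc 1 (n + 1),
      ((n + 1 + (m + 1) - i).choose (m + 1) : ℚ) / i =
        ((n + 1 + m - i).choose m : ℚ) / i + ((n + 1 + m - i).choose (m + 1) : ℚ) / i := by
    intro i hi
    have hi : i ≤ n + 1 := (mem_Icc.mp hi).2
    rw [show n + 1 + (m + 1) - i = n + 1 + m - i + 1 by omega, Nat.choose_succ_succ, Nat.cast_add,
      add_div]
  have top_vanishes : ∑ i ∈ Icc 1 (n + 1), ((n + 1 + m - i).choose (m + 1) : ℚ) / i =
      binomHarmonicSum n (m + 1) := by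
    rw [sum_Icc_succ_top (by omega), binomHarmonicSum, show n + 1 + m - (n + 1) = m by omega,
      Nat.choose_succ_self, Nat.cast_zero, zero_div, add_zero]
    refine sum_congr rfl fun i _ => ?_
    rw [show n + 1 + m - i = n + (m + 1) - i by omega]
  rw [binomHarmonicSum, sum_congr rfl pascal, sum_add_distrib, top_vanishes, add_comm]
  rfl

lemma binomHarmonicSum_eq_choose_mul (n m : ℕ) :
    binomHarmonicSum n m = (n + m).choose m * (harmonic (n + m) - harmonic m) := by
  induction n generalizing m with
  | zero => simp [binomHarmonicSum_zero_left]
  | succ n ihn =>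
    induction m with
    | zero => simp [binomHarmonicSum_zero_right]
    | succ m ihm =>
      have absorption : ((n + m + 1 + 1 : ℕ) : ℚ) * (n + m + 1).choose m =
          (((n + m + 1).choose m + (n + m + 1).choose (m + 1) : ℕ) : ℚ) * (m + 1 : ℕ) := by
        rw [← Nat.choose_succ_succ]
        exact_mod_cast Nat.add_one_mul_choose_eq (n + m + 1) m
      rw [binomHarmonicSum_succ_succ, ihn, ihm, show n + (m + 1) = n + m + 1 by omega,
        show n + 1 + m = n + m + 1 by omega, show n + 1 + (m + 1) = n + m + 1 + 1 by omega,
        harmonic_succ (n + m + 1), harmonic_succ m, Nat.choose_succ_succ (n + m + 1) m]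
      push_cast at absorption ⊢
      field_simp
      linear_combination absorption

theorem stmt_7 (K j M : ℕ) (hj : 1 ≤ j) (hjK : j ≤ K) (hM : K - j + 1 ≤ M) :
    ((K : ℚ) - j + 1) / j * (1 / ∑ i ∈ Finset.Icc j K, 1 / (i : ℚ)) =
      (K.choose j : ℚ) /
        ∑ i ∈ Finset.Icc 1 (K - j + 1), ((K - i).choose (j - 1) : ℚ) / (min i M : ℚ) := by
  obtain ⟨m, rfl⟩ : ∃ m, j = m + 1 := ⟨j - 1, by omega⟩
  obtain ⟨n, rfl⟩ : ∃ n, K = n + m := ⟨K - m, by omega⟩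
  have denominator : ∑ i ∈ Icc 1 (n + m - (m + 1) + 1),
      ((n + m - i).choose (m + 1 - 1) : ℚ) / (min i M : ℚ) = binomHarmonicSum n m := by
    rw [show n + m - (m + 1) + 1 = n by omega, Nat.add_sub_cancel]
    refine sum_congr rfl fun i hi => ?_
    rw [min_eq_left (by exact_mod_cast (mem_Icc.mp hi).2.trans (by omega))]
  have tail_sum_pos : 0 < ∑ i ∈ Icc (m + 1) (n + m), 1 / (i : ℚ) :=
    sum_pos (fun i hi => one_div_pos.mpr (Nat.cast_pos.mpr (by grind))) ⟨m + 1, by simp; omega⟩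
  have choose_pos : (0 : ℚ) < (n + m).choose m := Nat.cast_pos.mpr (Nat.choose_pos (by omega))
  have absorption : ((n + m).choose m : ℚ) * n = (n + m).choose (m + 1) * (m + 1) := by
    have := Nat.choose_succ_right_eq (n + m) m
    rw [Nat.add_sub_cancel] at this
    exact_mod_cast this.symm
  rw [denominator, binomHarmonicSum_eq_choose_mul,
    ← sum_Icc_one_div_eq_harmonic_sub (show m ≤ n + m by omega)]
  push_cast
  rw [div_mul_div_comm, div_eq_div_iff (by positivity) (by positivity)]
  linear_combination (∑ i ∈ Icc (m + 1) (n + m), 1 / (i : ℚ)) * absorption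
end

section
/- For all integers $1 \le j < K$, the order-$j$ DoF closed form satisfies $\frac{K-j+1}{j}\cdot\frac{1}{\sum_{i=j}^{K} 1/i} > \frac{K-j}{j+1}\cdot\frac{1}{\sum_{i=j+1}^{K} 1/i}$, i.e., the closed-form DoF is strictly decreasing in the message order $j$. -/
/-!
Write `S = ∑_{i=j+1}^K 1/i`, so that the full tail sum is `1/j + S`. Clearing denominators,
the claimed inequality becomes `K - j < (K + 1) S`, and this follows from the crude bound
`S ≥ (K - j)/K` obtained by replacing every term `1/i` by the smallest one, `1/K`.
-/

open Finset

variable {α : Type*} [Field α] [LinearOrder α] [IsStrictOrderedRing α]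

lemma div_le_sum_Icc_succ_one_div {a b : ℕ} (hab : a ≤ b) :
    ((b : α) - a) / b ≤ ∑ i ∈ Icc (a + 1) b, 1 / (i : α) := by
  have hterm : ∀ i ∈ Icc (a + 1) b, 1 / (b : α) ≤ 1 / (i : α) := by
    intro i hi
    rw [mem_Icc] at hi
    exact one_div_le_one_div_of_le (by exact_mod_cast (by omega : 0 < i)) (by exact_mod_cast hi.2)
  calc ((b : α) - a) / b = #(Icc (a + 1) b) • (1 / (b : α)) := by
        rw [Nat.card_Icc, nsmul_eq_mul, show b + 1 - (a + 1) = b - a by omega,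
          Nat.cast_sub hab, mul_one_div]
    _ = ∑ _i ∈ Icc (a + 1) b, 1 / (b : α) := (sum_const _).symm
    _ ≤ ∑ i ∈ Icc (a + 1) b, 1 / (i : α) := sum_le_sum hterm

lemma sub_lt_succ_mul_sum_Icc_succ_one_div {j K : ℕ} (hjK : j < K) :
    (K : α) - j < (K + 1) * ∑ i ∈ Icc (j + 1) K, 1 / (i : α) := by
  have hK : (0 : α) < K := by exact_mod_cast (by omega : 0 < K)
  have hKj : (0 : α) < K - j := sub_pos.mpr (by exact_mod_cast hjK)
  calc (K : α) - j < (K + 1) * ((K - j) / K) := by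
        rw [mul_div_assoc', lt_div_iff₀ hK]
        nlinarith
    _ ≤ (K + 1) * ∑ i ∈ Icc (j + 1) K, 1 / (i : α) := by
        gcongr
        exact div_le_sum_Icc_succ_one_div hjK.le

lemma div_mul_one_div_lt_of_sub_lt {K j S : α} (hj : 0 < j) (hS : 0 < S)
    (h : K - j < (K + 1) * S) :
    (K - j) / (j + 1) * (1 / S) < (K - j + 1) / j * (1 / (1 / j + S)) := by
  have hjS : 1 / j + S = (1 + j * S) / j := by field_simp
  rw [hjS, one_div_div, div_mul_div_cancel₀ hj.ne', div_mul_div_comm, mul_one,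
    div_lt_div_iff₀ (by positivity) (by positivity)]
  nlinarith

theorem stmt_19 (K j : ℕ) (hj : 1 ≤ j) (hjK : j < K) :
    ((K : ℚ) - j) / (j + 1) * (1 / ∑ i ∈ Finset.Icc (j + 1) K, 1 / (i : ℚ)) <
      ((K : ℚ) - j + 1) / j * (1 / ∑ i ∈ Finset.Icc j K, 1 / (i : ℚ)) := by
  have hj0 : (0 : ℚ) < j := by exact_mod_cast hj
  have hS : (0 : ℚ) < ∑ i ∈ Icc (j + 1) K, 1 / (i : ℚ) :=
    sum_pos (fun i hi => one_div_pos.mpr <| Nat.cast_pos.mpr <| by have := (mem_Icc.mp hi).1; omega)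
      ⟨K, mem_Icc.mpr ⟨hjK, le_rfl⟩⟩
  rw [← add_sum_Ioc_eq_sum_Icc hjK.le, ← Icc_add_one_left_eq_Ioc]
  exact div_mul_one_div_lt_of_sub_lt hj0 hS (sub_lt_succ_mul_sum_Icc_succ_one_div hjK)
end
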